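/- arXiv:2403.06320 — 3 statements merged into one kernel-verified Lean document; each statement's English description precedes it below -/
import Mathlib

section
/- For every real number $a$, the function $s \mapsto \kappa(s,a) = \tanh(s\sqrt{a^2+1}) / (\sqrt{a^2+1} - a\tanh(s\sqrt{a^2+1}))$ satisfies the Riccati initial value problem: $\kappa(0,a) = 0$ and $\partial_s \kappa(s,a) = 1 + 2a\,\kappa(s,a) - \kappa(s,a)^2$ for all $s \in \mathbb{R}$. -/
/-!
Write `b = √(a²+1)` and `t = tanh (s b)`, so that `κ = t / (b - a t)` and `t' = b (1 - t²)`.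
The quotient rule gives `κ' = b² (1 - t²) / (b - a t)²`, while
`1 + 2aκ - κ² = (b² - (a² + 1) t²) / (b - a t)²`; these agree exactly because `b² = a² + 1`.
The denominator never vanishes since `|a t| ≤ |a| < b`.
-/

open Real

noncomputable def kappa (s a : ℝ) : ℝ :=
  Real.tanh (s * Real.sqrt (a ^ 2 + 1)) /
    (Real.sqrt (a ^ 2 + 1) - a * Real.tanh (s * Real.sqrt (a ^ 2 + 1)))

theorem Real.hasDerivAt_tanh (x : ℝ) : HasDerivAt tanh (1 - tanh x ^ 2) x := by
  have hcosh : cosh x ≠ 0 := (cosh_pos x).ne'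
  have hquot := (hasDerivAt_sinh x).div (hasDerivAt_cosh x) hcosh
  rw [show (sinh / cosh) = tanh from funext fun y => (tanh_eq_sinh_div_cosh y).symm] at hquot
  refine hquot.congr_deriv ?_
  rw [tanh_eq_sinh_div_cosh]
  field_simp

theorem abs_mul_lt_sqrt_sq_add_one (a : ℝ) {t : ℝ} (ht : |t| < 1) :
    |a * t| < √(a ^ 2 + 1) :=
  calc |a * t| = |a| * |t| := abs_mul a t
    _ ≤ |a| := mul_le_of_le_one_right (abs_nonneg a) ht.le
    _ = √(a ^ 2) := (sqrt_sq_eq_abs a).symm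
    _ < √(a ^ 2 + 1) := sqrt_lt_sqrt (sq_nonneg a) (lt_add_one _)

theorem sqrt_sq_add_one_sub_mul_tanh_ne_zero (a x : ℝ) : √(a ^ 2 + 1) - a * tanh x ≠ 0 :=
  sub_ne_zero.mpr fun h =>
    (abs_mul_lt_sqrt_sq_add_one a (abs_tanh_lt_one x)).not_ge (h ▸ le_abs_self _)

theorem hasDerivAt_tanh_mul_div_sub (a b s : ℝ) (hb : b ^ 2 = a ^ 2 + 1)
    (hden : b - a * tanh (s * b) ≠ 0) :
    HasDerivAt (fun s' => tanh (s' * b) / (b - a * tanh (s' * b)))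
      (1 + 2 * a * (tanh (s * b) / (b - a * tanh (s * b)))
        - (tanh (s * b) / (b - a * tanh (s * b))) ^ 2) s := by
  have htanh : HasDerivAt (fun s' => tanh (s' * b)) ((1 - tanh (s * b) ^ 2) * b) s :=
    (hasDerivAt_tanh (s * b)).comp (h₂ := tanh) s (hasDerivAt_mul_const b)
  refine (htanh.fun_div ((htanh.const_mul a).const_sub b) hden).congr_deriv ?_
  generalize tanh (s * b) = t at hden ⊢
  -- naming the denominator stops `field_simp` from reordering it into `b - t * a` and losing `hden`
  set d := b - a * t
  field_simp
  linear_combination (-t ^ 2) * hb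

/-- For every real `a`, the function `s ↦ κ(s,a)` solves the Riccati initial value problem
`κ(0,a) = 0`, `∂ₛκ(s,a) = 1 + 2a·κ(s,a) - κ(s,a)²` for all `s ∈ ℝ`. -/
theorem kappa_riccati (a : ℝ) :
    kappa 0 a = 0 ∧
    ∀ s : ℝ, HasDerivAt (fun s' => kappa s' a)
      (1 + 2 * a * kappa s a - (kappa s a) ^ 2) s := by
  refine ⟨by simp [kappa], fun s => ?_⟩
  exact hasDerivAt_tanh_mul_div_sub a _ s (sq_sqrt (by positivity))
    (sqrt_sq_add_one_sub_mul_tanh_ne_zero a _)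
end

section
/- There is an absolute constant $C$ (one may take $C = 3$) such that for every real number $a$ and every $s \geq 0$, one has $\kappa(s,a) \leq C \cdot \max\{a, 1\}$, where $\kappa(s,a) = \tanh(s\sqrt{a^2+1}) / (\sqrt{a^2+1} - a\tanh(s\sqrt{a^2+1}))$. Consequently, the optimal known-$a$ control $u(t) = -\kappa(T-t,a)q(t)$ satisfies $|u(t)| \leq C\max\{a,1\}\cdot|q(t)|$ for $t \in [0,T]$. -/
/-!
Write `r = √(a² + 1)` and `τ = tanh(s r) ∈ [0, 1]`. Since `r > |a|`, the map `τ ↦ τ / (r - a τ)` is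
increasing on `[0, 1]`, so `κ(s, a) ≤ 1 / (r - a) = r + a`, and `r + a ≤ |a| + 1 + a ≤ 3 max{a, 1}`.
-/

open Real

theorem Real.tanh_nonneg {x : ℝ} (hx : 0 ≤ x) : 0 ≤ tanh x := by
  rw [tanh_eq_sinh_div_cosh]
  exact div_nonneg (sinh_nonneg_iff.mpr hx) (cosh_pos x).le

section Fraction

variable {a r t : ℝ}

lemma sub_mul_pos (hr : 0 < r) (har : a < r) (ht₀ : 0 ≤ t) (ht₁ : t ≤ 1) : 0 < r - a * t := by
  rcases le_total a 0 with ha | ha <;> nlinarith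

lemma div_sub_mul_nonneg (hr : 0 < r) (har : a < r) (ht₀ : 0 ≤ t) (ht₁ : t ≤ 1) :
    0 ≤ t / (r - a * t) :=
  div_nonneg ht₀ (sub_mul_pos hr har ht₀ ht₁).le

lemma div_sub_mul_le_inv_sub (hr : 0 < r) (har : a < r) (ht₀ : 0 ≤ t) (ht₁ : t ≤ 1) :
    t / (r - a * t) ≤ (r - a)⁻¹ := by
  rw [div_le_iff₀ (sub_mul_pos hr har ht₀ ht₁), ← div_eq_inv_mul,
    le_div_iff₀ (sub_pos.mpr har)]
  nlinarith

end Fraction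

section SqrtSqAddOne

variable (a : ℝ)

lemma lt_sqrt_sq_add_one : a < √(a ^ 2 + 1) :=
  (le_abs_self a).trans_lt (lt_sqrt (abs_nonneg a) |>.mpr (by rw [sq_abs]; linarith))

lemma sqrt_sq_add_one_le_abs_add_one : √(a ^ 2 + 1) ≤ |a| + 1 :=
  (sqrt_le_left (by positivity)).mpr (by nlinarith [sq_abs a, abs_nonneg a])

lemma inv_sqrt_sq_add_one_sub : (√(a ^ 2 + 1) - a)⁻¹ = √(a ^ 2 + 1) + a := by
  refine inv_eq_of_mul_eq_one_right ?_
  have hsq : √(a ^ 2 + 1) ^ 2 = a ^ 2 + 1 := sq_sqrt (by positivity)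
  linear_combination hsq

lemma sqrt_sq_add_one_add_le : √(a ^ 2 + 1) + a ≤ 3 * max a 1 := by
  have := sqrt_sq_add_one_le_abs_add_one a
  rcases le_total 0 a with ha | ha
  · rw [abs_of_nonneg ha] at this
    nlinarith [le_max_left a 1, le_max_right a 1]
  · rw [abs_of_nonpos ha] at this
    linarith [le_max_right a 1]

end SqrtSqAddOne

lemma kappa_mem_Icc (a : ℝ) {s : ℝ} (hs : 0 ≤ s) : kappa s a ∈ Set.Icc 0 (3 * max a 1) := by
  have hr : 0 < √(a ^ 2 + 1) := sqrt_pos.mpr (by positivity)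
  have har := lt_sqrt_sq_add_one a
  have ht₀ : 0 ≤ tanh (s * √(a ^ 2 + 1)) := tanh_nonneg (mul_nonneg hs hr.le)
  have ht₁ := (tanh_lt_one (s * √(a ^ 2 + 1))).le
  refine ⟨div_sub_mul_nonneg hr har ht₀ ht₁, ?_⟩
  calc kappa s a ≤ (√(a ^ 2 + 1) - a)⁻¹ := div_sub_mul_le_inv_sub hr har ht₀ ht₁
    _ = √(a ^ 2 + 1) + a := inv_sqrt_sq_add_one_sub a
    _ ≤ 3 * max a 1 := sqrt_sq_add_one_add_le a

/-- There is an absolute constant `C` (one may take `C = 3`) such that `κ(s,a) ≤ C·max{a,1}`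
for every real `a` and every `s ≥ 0`; consequently the optimal known-`a` control
`u(t) = -κ(T-t,a)·q(t)` satisfies `|u(t)| ≤ C·max{a,1}·|q(t)|` for `t ∈ [0,T]`. -/
theorem kappa_bound :
    ∃ C : ℝ, C = 3 ∧
      (∀ a s : ℝ, 0 ≤ s → kappa s a ≤ C * max a 1) ∧
      (∀ (a T : ℝ) (q : ℝ → ℝ) (t : ℝ), t ∈ Set.Icc 0 T →
        |(-(kappa (T - t) a)) * q t| ≤ C * max a 1 * |q t|) := by
  refine ⟨3, rfl, fun a s hs => (kappa_mem_Icc a hs).2, fun a T q t ht => ?_⟩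
  obtain ⟨hκ₀, hκ⟩ := kappa_mem_Icc a (sub_nonneg.mpr ht.2)
  rw [abs_mul, abs_neg, abs_of_nonneg hκ₀]
  exact mul_le_mul_of_nonneg_right hκ (abs_nonneg _)
end

section
/- Let $X$ be a set (of strategies), $A$ a set (of parameter values), $E \subseteq A$ a nonempty finite subset, and $p : E \to \mathbb{R}$ with $p(a) > 0$ for all $a \in E$ and $\sum_{a \in E} p(a) = 1$. Let $C : X \to A \to \mathbb{R}$ (expected cost) and $R : X \to A \to \mathbb{R}$ (regret), and let $\sigma \in X$ satisfy: (I) for every $\sigma' \in X$, $\sum_{a \in E} p(a)\,C(\sigma)(a) \leq \sum_{a \in E} p(a)\,C(\sigma')(a)$; (II) for all $\sigma' \in X$ and $a \in A$, if $C(\sigma)(a) \leq C(\sigma')(a)$ then $R(\sigma)(a) \leq R(\sigma')(a)$; (III) $R(\sigma)(a) \leq R(\sigma)(a_0)$ for every $a \in A$ and every $a_0 \in E$. Then for every $\sigma' \in X$ and every $a \in A$ there exists $a_0 \in E$ with $R(\sigma)(a) \leq R(\sigma')(a_0)$; in particular $\sup_{a \in A} R(\sigma)(a) \leq \sup_{a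 \in A} R(\sigma')(a)$ for every $\sigma' \in X$. -/
/-!
Bayes-optimality of `σ` forbids any `σ'` from beating it at every point of the support `E`
of the prior, so at some `a₀ ∈ E` the cost of `σ'` — hence, by monotonicity, its regret — is at
least that of `σ`. Since `a₀` maximizes the regret of `σ`, that one value of `R σ'` dominates
every value of `R σ`.
-/

theorem Finset.exists_le_of_weighted_sum_le {ι : Type*} {s : Finset ι} {w f g : ι → ℝ}
    (hs : s.Nonempty) (hw : ∀ i ∈ s, 0 < w i)
    (h : ∑ i ∈ s, w i * f i ≤ ∑ i ∈ s, w i * g i) : ∃ i ∈ s, f i ≤ g i := by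
  obtain ⟨i, hi, hle⟩ := Finset.exists_le_of_sum_le hs h
  exact ⟨i, hi, le_of_mul_le_mul_left hle (hw i hi)⟩

theorem bayes_optimal_on_maximizers_minimizes_worst_case_regret_general
    {X : Type*} {A : Type*} (E : Finset A) (hE : E.Nonempty)
    (p : A → ℝ) (hp : ∀ a ∈ E, 0 < p a)
    (C R : X → A → ℝ) (σ : X)
    (hI : ∀ σ' : X, ∑ a ∈ E, p a * C σ a ≤ ∑ a ∈ E, p a * C σ' a)
    (hII : ∀ (σ' : X) (a : A), C σ a ≤ C σ' a → R σ a ≤ R σ' a)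
    (hIII : ∀ a : A, ∀ a₀ ∈ E, R σ a ≤ R σ a₀) :
    (∀ (σ' : X) (a : A), ∃ a₀ ∈ E, R σ a ≤ R σ' a₀) ∧
    (∀ σ' : X, (⨆ a : A, (R σ a : EReal)) ≤ ⨆ a : A, (R σ' a : EReal)) := by
  have regret_le : ∀ (σ' : X) (a : A), ∃ a₀ ∈ E, R σ a ≤ R σ' a₀ := fun σ' a => by
    obtain ⟨a₀, ha₀, hC⟩ := Finset.exists_le_of_weighted_sum_le hE hp (hI σ')
    exact ⟨a₀, ha₀, (hIII a a₀ ha₀).trans (hII σ' a₀ hC)⟩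
  refine ⟨regret_le, fun σ' => iSup_mono' fun a => ?_⟩
  obtain ⟨a₀, -, h⟩ := regret_le σ' a
  exact ⟨a₀, EReal.coe_le_coe_iff.mpr h⟩

/-- Abstract deduction of conclusion (IV) of Theorem 3 from (I), (II), (III): if `σ` is
Bayes-optimal for a prior `p` supported on a finite set `E` (I), the regret `R` is pointwise
monotone in the expected cost `C` (II), and every point of `E` maximizes `a ↦ R(σ)(a)` (III),
then for every competing strategy `σ'` and every `a` there is `a₀ ∈ E` with
`R(σ)(a) ≤ R(σ')(a₀)`; in particular `σ` minimizes the worst-case regret. -/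
theorem bayes_optimal_on_maximizers_minimizes_worst_case_regret
    {X : Type*} {A : Type*} (E : Finset A) (hE : E.Nonempty)
    (p : A → ℝ) (hp : ∀ a ∈ E, 0 < p a) (hp1 : ∑ a ∈ E, p a = 1)
    (C R : X → A → ℝ) (σ : X)
    (hI : ∀ σ' : X, ∑ a ∈ E, p a * C σ a ≤ ∑ a ∈ E, p a * C σ' a)
    (hII : ∀ (σ' : X) (a : A), C σ a ≤ C σ' a → R σ a ≤ R σ' a)
    (hIII : ∀ a : A, ∀ a₀ ∈ E, R σ a ≤ R σ a₀) :
    (∀ (σ' : X) (a : A), ∃ a₀ ∈ E, R σ a ≤ R σ' a₀) ∧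
    (∀ σ' : X, (⨆ a : A, (R σ a : EReal)) ≤ ⨆ a : A, (R σ' a : EReal)) :=
  bayes_optimal_on_maximizers_minimizes_worst_case_regret_general E hE p hp C R σ hI hII hIII
end
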